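/- Let Π be a bounded projection on a Hilbert space H (i.e. Π² = Π). Then the orthogonal projection Π₀ onto (ker Π)^⊥ satisfies Π₀ = Π* ∘ (Id − Π + Π*)⁻¹; in particular ker Π₀ = ker Π. -/

import Mathlib

/-!
Since `Q - Q†` is skew-adjoint, `re ⟪(1 - Q + Q†) x, x⟫ = ‖x‖²`, so `A = 1 - Q + Q†` is
coercive and hence invertible. The self-adjoint `P₀` has kernel `(range P₀)ᗮ = ker Q`, so
`P₀ Q = P₀`; and `range Q† ⊆ (ker Q)ᗮ = range P₀`, so `P₀ Q† = Q†`. Therefore `P₀ A = Q†`.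
-/

open ContinuousLinearMap
open scoped InnerProduct InnerProductSpace

namespace ContinuousLinearMap

section InnerProduct

variable {𝕜 E : Type*} [RCLike 𝕜] [NormedAddCommGroup E] [InnerProductSpace 𝕜 E]
  [CompleteSpace E]

theorem re_inner_adjoint_apply_self (S : E →L[𝕜] E) (x : E) :
    RCLike.re ⟪(S†) x, x⟫_𝕜 = RCLike.re ⟪S x, x⟫_𝕜 := by
  rw [adjoint_inner_left, inner_re_symm]

theorem re_inner_one_sub_add_adjoint_apply_self (S : E →L[𝕜] E) (x : E) :
    RCLike.re ⟪(1 - S + S†) x, x⟫_𝕜 = ‖x‖ ^ 2 := by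
  simp only [add_apply, sub_apply, one_apply_eq_self, inner_add_left, inner_sub_left, map_add,
    map_sub, re_inner_adjoint_apply_self, inner_self_eq_norm_sq, sub_add_cancel]

theorem isUnit_one_sub_add_adjoint (S : E →L[𝕜] E) : IsUnit (1 - S + S†) :=
  isUnit_of_forall_le_norm_inner_map _ one_pos fun x => by
    rw [NNReal.coe_one, mul_one, ← re_inner_one_sub_add_adjoint_apply_self S x]
    exact RCLike.re_le_norm _

theorem range_adjoint_le_orthogonal_ker (S : E →L[𝕜] E) :
    (S† : E →ₗ[𝕜] E).range ≤ (S : E →ₗ[𝕜] E).kerᗮ := by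
  rw [orthogonal_ker]
  exact Submodule.le_topologicalClosure _

end InnerProduct

section Idempotent

variable {R M : Type*} [Ring R] [TopologicalSpace M] [AddCommGroup M] [Module R M]

theorem IsIdempotentElem.comp_eq_left_of_ker_le {P Q : M →L[R] M} (hQ : IsIdempotentElem Q)
    (h : (Q : M →ₗ[R] M).ker ≤ (P : M →ₗ[R] M).ker) : P ∘L Q = P :=
  coe_injective <| (LinearMap.IsIdempotentElem.comp_eq_left_iff hQ.toLinearMap _).mpr h

theorem IsIdempotentElem.comp_eq_right_of_range_le {P S : M →L[R] M} (hP : IsIdempotentElem P)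
    (h : (S : M →ₗ[R] M).range ≤ (P : M →ₗ[R] M).range) : P ∘L S = S :=
  coe_injective <| (LinearMap.IsIdempotentElem.comp_eq_right_iff hP.toLinearMap _).mpr h

end Idempotent

end ContinuousLinearMap

theorem IsSelfAdjoint.ker_eq_of_range_eq_orthogonal {𝕜 E : Type*} [RCLike 𝕜]
    [NormedAddCommGroup E] [InnerProductSpace 𝕜 E] [CompleteSpace E] {P : E →L[𝕜] E}
    (hP : IsSelfAdjoint P) {K : Submodule 𝕜 E} (hK : IsClosed (K : Set E))
    (h : (P : E →ₗ[𝕜] E).range = Kᗮ) : (P : E →ₗ[𝕜] E).ker = K := by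
  rw [← hP.adjoint_eq, ← orthogonal_range, h, Submodule.orthogonal_orthogonal_eq_closure,
    hK.submodule_topologicalClosure_eq]

/-- Let `Π` be a bounded projection on a Hilbert space `H` (`Π² = Π`).
Then the orthogonal projection `Π₀` onto `(ker Π)ᗮ` (characterized as the self-adjoint
idempotent with range `(ker Π)ᗮ`) satisfies `Π₀ = Π* ∘ (Id − Π + Π*)⁻¹`;
in particular `ker Π₀ = ker Π`. -/
theorem statement1 {H : Type*}
    [NormedAddCommGroup H] [InnerProductSpace ℂ H] [CompleteSpace H]
    (Q : H →L[ℂ] H) (hQ : Q ∘L Q = Q)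
    (P₀ : H →L[ℂ] H) (hP₀sa : IsSelfAdjoint P₀) (hP₀idem : P₀ ∘L P₀ = P₀)
    (hP₀range : LinearMap.range (P₀ : H →ₗ[ℂ] H) = (LinearMap.ker (Q : H →ₗ[ℂ] H))ᗮ) :
    ∃ T : H →L[ℂ] H,
      ((1 : H →L[ℂ] H) - Q + ContinuousLinearMap.adjoint Q) ∘L T = 1 ∧
      T ∘L ((1 : H →L[ℂ] H) - Q + ContinuousLinearMap.adjoint Q) = 1 ∧
      P₀ = ContinuousLinearMap.adjoint Q ∘L T ∧
      LinearMap.ker (P₀ : H →ₗ[ℂ] H) = LinearMap.ker (Q : H →ₗ[ℂ] H) := by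
  have hA := isUnit_one_sub_add_adjoint Q
  have hker := hP₀sa.ker_eq_of_range_eq_orthogonal (isClosed_ker Q) hP₀range
  have hP₀Q : P₀ ∘L Q = P₀ := IsIdempotentElem.comp_eq_left_of_ker_le hQ hker.ge
  have hP₀Qadj : P₀ ∘L Q† = Q† :=
    IsIdempotentElem.comp_eq_right_of_range_le hP₀idem
      (hP₀range ▸ range_adjoint_le_orthogonal_ker Q)
  have hP₀A : P₀ * (1 - Q + Q†) = Q† := by
    rw [mul_add, mul_sub, mul_one, mul_def, mul_def, hP₀Q, hP₀Qadj, sub_self, zero_add]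
  refine ⟨↑hA.unit⁻¹, hA.mul_val_inv, hA.val_inv_mul, ?_, hker⟩
  calc P₀ = P₀ * ((1 - Q + Q†) * ↑hA.unit⁻¹) := by rw [hA.mul_val_inv, mul_one]
    _ = Q† ∘L ↑hA.unit⁻¹ := by rw [← mul_assoc, hP₀A, mul_def]
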